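/- Let (G, G_•) be a filtered group and q: {0,1}^n → G. Then q ∈ C^n(G_•) if and only if for every m and every m-face map φ: {0,1}^m → {0,1}^n, the Gray-code alternating product σ_m(q ∘ φ) lies in G_m. -/

import Mathlib

open Finset

/-- Embedding of the discrete cube `{0,1}^n` into `ℤ^n`. -/
def cubeEmb {n : ℕ} (v : Fin n → Bool) : Fin n → ℤ := fun i => if v i then 1 else 0

/-- A discrete-cube morphism: the restriction to `{0,1}^m` of an affine
homomorphism `ℤ^m → ℤ^n`. -/
def IsCubeMorphism {m n : ℕ} (φ : (Fin m → Bool) → (Fin n → Bool)) : Prop :=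
  ∃ (M : (Fin m → ℤ) →+ (Fin n → ℤ)) (t : Fin n → ℤ),
    ∀ v : Fin m → Bool, cubeEmb (φ v) = M (cubeEmb v) + t

/-- A face of `{0,1}^n` of codimension `c`: fix `c` coordinates. -/
def IsFaceOfCodim {n : ℕ} (F : Set (Fin n → Bool)) (c : ℕ) : Prop :=
  ∃ (I : Finset (Fin n)) (x : Fin n → Bool), I.card = c ∧
    F = {v : Fin n → Bool | ∀ i ∈ I, v i = x i}

/-- An `m`-face map into `{0,1}^n`: an injective cube morphism whose image is
an `m`-dimensional face. -/
def IsFaceMap {m n : ℕ} (φ : (Fin m → Bool) → (Fin n → Bool)) : Prop :=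
  IsCubeMorphism φ ∧ Function.Injective φ ∧ IsFaceOfCodim (Set.range φ) (n - m)

/-- The number of coordinates of `v` equal to `1`. -/
def weight {n : ℕ} (v : Fin n → Bool) : ℕ := (Finset.univ.filter fun i => v i = true).card

/-- A (pre)filtration on a group: a decreasing chain of subgroups with
`[G_i, G_j] ⊆ G_{i+j}`. -/
def IsGrpFiltrationHK {G : Type*} [Group G] (Gf : ℕ → Subgroup G) : Prop :=
  (∀ i, Gf (i + 1) ≤ Gf i) ∧
  (∀ i j : ℕ, ∀ x ∈ Gf i, ∀ y ∈ Gf j, x⁻¹ * y⁻¹ * x * y ∈ Gf (i + j))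

open Classical in
/-- The face-group element `g^F`: equal to `g` on `F` and to the identity elsewhere. -/
noncomputable def faceEl {G : Type*} [Group G] {n : ℕ} (F : Set (Fin n → Bool)) (g : G) :
    (Fin n → Bool) → G :=
  fun v => if v ∈ F then g else 1

/-- The Host–Kra cube group `C^n(G_•)`: the subgroup of `G^{{0,1}^n}` generated by
the face groups. -/
noncomputable def hkCubes {G : Type*} [Group G] (Gf : ℕ → Subgroup G) (n : ℕ) :
    Subgroup ((Fin n → Bool) → G) :=
  Subgroup.closure { f | ∃ (c : ℕ) (F : Set (Fin n → Bool)) (g : G),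
    IsFaceOfCodim F c ∧ g ∈ Gf c ∧ f = faceEl F g }

/-- Restriction of a map on `{0,1}^{n+1}` to the lower face `{v : v_j = 0}`,
viewed as a map on `{0,1}^n`. -/
def lowerFaceRestr {X : Type*} {n : ℕ} (q : (Fin (n + 1) → Bool) → X) (j : Fin (n + 1)) :
    (Fin n → Bool) → X :=
  fun v => q (j.insertNth false v)

/-- An `(n+1)`-corner: every restriction to an `n`-face containing `0^{n+1}` is a cube. -/
def IsNSCorner {X : Type*} (C : ∀ n, ((Fin n → Bool) → X) → Prop) (n : ℕ)
    (q' : (Fin (n + 1) → Bool) → X) : Prop :=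
  ∀ j : Fin (n + 1), C n (lowerFaceRestr q' j)

/-- `q` is a completion of the corner `q'`. -/
def IsNSCompletion {X : Type*} (C : ∀ n, ((Fin n → Bool) → X) → Prop) (n : ℕ)
    (q' q : (Fin (n + 1) → Bool) → X) : Prop :=
  C (n + 1) q ∧ ∀ v : Fin (n + 1) → Bool, v ≠ (fun _ => true) → q v = q' v

/-- The nilspace axioms: composition, ergodicity and corner completion. -/
def IsNilspace {X : Type*} (C : ∀ n, ((Fin n → Bool) → X) → Prop) : Prop :=
  (∀ (m n : ℕ) (φ : (Fin m → Bool) → (Fin n → Bool)), IsCubeMorphism φ →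
      ∀ q, C n q → C m (q ∘ φ)) ∧
  (∀ q : (Fin 1 → Bool) → X, C 1 q) ∧
  (∀ n (q' : (Fin (n + 1) → Bool) → X), IsNSCorner C n q' → ∃ q, IsNSCompletion C n q' q)

/-- A `k`-step nilspace: a nilspace in which every `(k+1)`-corner has a unique
completion. -/
def IsKStepNilspace {X : Type*} (C : ∀ n, ((Fin n → Bool) → X) → Prop) (k : ℕ) : Prop :=
  IsNilspace C ∧
  ∀ q' : (Fin (k + 1) → Bool) → X, IsNSCorner C k q' → ∃! q, IsNSCompletion C k q' q

/-- The Gray-code alternating product `σ_n`. -/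
def graySigma {G : Type*} [Group G] : (n : ℕ) → ((Fin n → Bool) → G) → G
  | 0, g => g (fun i => i.elim0)
  | n + 1, g => (graySigma n (fun v => g (Fin.snoc v true)))⁻¹ *
      graySigma n (fun v => g (Fin.snoc v false))

/-- The difference operator `∂_h g (x) = g(x)⁻¹ g(xh)`. -/
def mulDiff {H G : Type*} [Group H] [Group G] (h : H) (g : H → G) : H → G :=
  fun x => (g x)⁻¹ * g (x * h)

/-- `g : H → G` is a polynomial map adapted to the filtrations `H_•, G_•`. -/
def IsPolyMap {H G : Type*} [Group H] [Group G] (Hf : ℕ → Subgroup H)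
    (Gf : ℕ → Subgroup G) (g : H → G) : Prop :=
  ∀ (n : ℕ) (d : Fin n → ℕ) (h : Fin n → H), (∀ j, h j ∈ Hf (d j)) →
    ∀ x : H, ((List.ofFn h).foldr mulDiff g) x ∈ Gf (∑ j, d j)

/-- The `k`-arrow `⟨q_0, q_1⟩_k : {0,1}^{n+k} → X`. -/
def arrowMap {X : Type*} {n k : ℕ} (q0 q1 : (Fin n → Bool) → X) :
    (Fin (n + k) → Bool) → X :=
  fun v =>
    if ∀ j : Fin k, v (Fin.natAdd n j) = true
    then q1 (fun i => v (Fin.castAdd k i))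
    else q0 (fun i => v (Fin.castAdd k i))

/-!
Both directions go by induction on the dimension through the derivative in the first
coordinate, `∂q(v) = q(1,v)⁻¹ q(0,v)`: a map `q` on `{0,1}^{n+1}` lies in `C^{n+1}(G_•)` iff its
lower face `q(0,·)` lies in `C^n(G_•)` and `∂q` lies in `C^n(G_{•+1})`. That `∂` maps cubes to
cubes rests on `C^n(G_•)` normalising `C^n(G_{•+1})`, which is where `[G_i, G_j] ⊆ G_{i+j}` enters.

Since `σ_{m+1}(q) = σ_m(∂q)`, iterating gives `σ_m(C^m(G_•)) ⊆ G_m`, and cubes pull back to cubes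
along cube morphisms: every output coordinate of a cube morphism is constant or a possibly
negated input coordinate, so preimages of faces are faces of no larger codimension. Conversely,
the lower face and the derivative of `q`, restricted along a face map `φ`, are `q` restricted
along the face maps `(0, φ)` and `id × φ`.
-/

section CubeMorphism

variable {m n : ℕ}

lemma dotProduct_cubeEmb_indicator (a : Fin m → ℤ) (S : Finset (Fin m)) :
    a ⬝ᵥ cubeEmb (fun j => decide (j ∈ S)) = ∑ j ∈ S, a j := by
  simp [dotProduct, cubeEmb]

lemma eq_const_or_eq_coord_of_affine {f : (Fin m → Bool) → Bool} {a : Fin m → ℤ} {t : ℤ}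
    (hf : ∀ v, (if f v then (1 : ℤ) else 0) = a ⬝ᵥ cubeEmb v + t) :
    (∃ b, ∀ v, f v = b) ∨ ∃ j b, ∀ v, f v = (v j ^^ b) := by
  classical
  have hval : ∀ S : Finset (Fin m), ∑ j ∈ S, a j + t = 0 ∨ ∑ j ∈ S, a j + t = 1 := by
    intro S
    rw [← dotProduct_cubeEmb_indicator, ← hf]
    split <;> simp
  by_cases hzero : ∀ j, a j = 0
  · left
    have hconst : ∀ v, (if f v then (1 : ℤ) else 0) = t := fun v => by
      simp [hf, dotProduct, hzero]
    refine ⟨f 0, fun v => ?_⟩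
    have hv := (hconst v).trans (hconst 0).symm
    cases hfv : f v <;> cases hf0 : f 0 <;> simp [hfv, hf0] at hv ⊢
  · right
    push Not at hzero
    obtain ⟨j, hj⟩ := hzero
    have h0 := hval ∅
    have h1 := hval {j}
    simp only [Finset.sum_empty, Finset.sum_singleton] at h0 h1
    -- with `a j ≠ 0 ≠ a k`, the values at `0, e_j, e_k, e_j + e_k` cannot all lie in `{0, 1}`
    have hothers : ∀ k, k ≠ j → a k = 0 := by
      intro k hk
      have h2 := hval {k}
      have h3 := hval {j, k}
      rw [Finset.sum_pair hk.symm] at h3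
      rw [Finset.sum_singleton] at h2
      omega
    have hdot : ∀ v, a ⬝ᵥ cubeEmb v = a j * cubeEmb v j := fun v =>
      Finset.sum_eq_single j (fun k _ hk => by rw [hothers k hk, zero_mul]) (by simp)
    have hcases : (t = 0 ∧ a j = 1) ∨ (t = 1 ∧ a j = -1) := by omega
    refine ⟨j, decide (t = 1), fun v => ?_⟩
    have hv := hf v
    rw [hdot] at hv
    rcases hcases with ⟨rfl, h⟩ | ⟨rfl, h⟩ <;>
      cases hfv : f v <;> cases hvj : v j <;> simp_all [cubeEmb]

lemma exists_affine_of_eq_const_or_eq_coord {f : (Fin m → Bool) → Bool}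
    (hf : (∃ b, ∀ v, f v = b) ∨ ∃ j b, ∀ v, f v = (v j ^^ b)) :
    ∃ (a : Fin m → ℤ) (t : ℤ), ∀ v, (if f v then (1 : ℤ) else 0) = a ⬝ᵥ cubeEmb v + t := by
  classical
  rcases hf with ⟨b, hb⟩ | ⟨j, b, hb⟩
  · exact ⟨0, if b then 1 else 0, fun v => by simp [hb]⟩
  · refine ⟨Pi.single j (if b then -1 else 1), if b then 1 else 0, fun v => ?_⟩
    rw [hb, single_dotProduct]
    simp only [cubeEmb]
    cases b <;> cases v j <;> simp

lemma isCubeMorphism_iff {φ : (Fin m → Bool) → (Fin n → Bool)} :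
    IsCubeMorphism φ ↔ ∀ i, (∃ b, ∀ v, φ v i = b) ∨ ∃ j b, ∀ v, φ v i = (v j ^^ b) := by
  constructor
  · rintro ⟨M, t, hM⟩ i
    refine eq_const_or_eq_coord_of_affine (a := fun j => LinearMap.toMatrix' M.toIntLinearMap i j)
      (t := t i) fun v => ?_
    have hv := congrFun (hM v) i
    rwa [show M (cubeEmb v) = (LinearMap.toMatrix' M.toIntLinearMap).mulVec (cubeEmb v) from
      (LinearMap.toMatrix'_mulVec M.toIntLinearMap _).symm] at hv
  · intro h
    choose a t ht using fun i => exists_affine_of_eq_const_or_eq_coord (h i)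
    exact ⟨(Matrix.of a).mulVecLin.toAddMonoidHom, t, fun v => funext fun i => ht i v⟩

end CubeMorphism

section Faces

variable {m n : ℕ}

def cubeFace (I : Finset (Fin n)) (x : Fin n → Bool) : Set (Fin n → Bool) :=
  {v | ∀ i ∈ I, v i = x i}

/-- Includes `∅`, so that the notion is closed under intersections and preimages. -/
def IsFaceOfCodimLE (S : Set (Fin n → Bool)) (c : ℕ) : Prop :=
  S = ∅ ∨ ∃ I x, I.card ≤ c ∧ S = cubeFace I x

lemma cubeFace_empty (x : Fin n → Bool) : cubeFace ∅ x = Set.univ := by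
  simp [cubeFace]

lemma cubeFace_insert (i : Fin n) (I : Finset (Fin n)) (x : Fin n → Bool) :
    cubeFace (insert i I) x = {v | v i = x i} ∩ cubeFace I x := by
  ext v
  simp [cubeFace]

lemma IsFaceOfCodim.isFaceOfCodimLE {F : Set (Fin n → Bool)} {c : ℕ} (hF : IsFaceOfCodim F c) :
    IsFaceOfCodimLE F c :=
  let ⟨I, x, hI, hF⟩ := hF
  Or.inr ⟨I, x, hI.le, hF⟩

lemma isFaceOfCodimLE_empty (c : ℕ) : IsFaceOfCodimLE (∅ : Set (Fin n → Bool)) c :=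
  Or.inl rfl

lemma isFaceOfCodimLE_univ : IsFaceOfCodimLE (Set.univ : Set (Fin n → Bool)) 0 :=
  Or.inr ⟨∅, fun _ => false, le_rfl, (cubeFace_empty _).symm⟩

lemma IsFaceOfCodimLE.mono {S : Set (Fin n → Bool)} {c d : ℕ} (hS : IsFaceOfCodimLE S c)
    (hcd : c ≤ d) : IsFaceOfCodimLE S d := by
  rcases hS with hS | ⟨I, x, hI, hS⟩
  · exact Or.inl hS
  · exact Or.inr ⟨I, x, hI.trans hcd, hS⟩

lemma IsFaceOfCodimLE.inter {S T : Set (Fin n → Bool)} {c d : ℕ} (hS : IsFaceOfCodimLE S c)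
    (hT : IsFaceOfCodimLE T d) : IsFaceOfCodimLE (S ∩ T) (c + d) := by
  classical
  rcases hS with rfl | ⟨I, x, hI, rfl⟩
  · simpa using isFaceOfCodimLE_empty _
  rcases hT with rfl | ⟨J, y, hJ, rfl⟩
  · simpa using isFaceOfCodimLE_empty _
  by_cases hxy : ∀ i ∈ I ∩ J, x i = y i
  · refine Or.inr ⟨I ∪ J, fun i => if i ∈ I then x i else y i,
      (Finset.card_union_le I J).trans (add_le_add hI hJ), ?_⟩
    ext v
    simp only [cubeFace, Set.mem_inter_iff, Set.mem_ofPred_eq, Finset.mem_union,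
      Finset.mem_inter] at hxy ⊢
    constructor
    · rintro ⟨hvx, hvy⟩ i (hi | hi)
      · simp [hi, hvx i hi]
      · split_ifs with hiI
        · exact hvx i hiI
        · exact hvy i hi
    · intro hv
      refine ⟨fun i hi => by simpa [hi] using hv i (Or.inl hi), fun i hi => ?_⟩
      by_cases hiI : i ∈ I
      · simpa [hiI, hxy i ⟨hiI, hi⟩] using hv i (Or.inl hiI)
      · simpa [hiI] using hv i (Or.inr hi)
  · push Not at hxy
    obtain ⟨i, hi, hne⟩ := hxy
    refine Or.inl (Set.eq_empty_of_forall_notMem fun v ⟨hvx, hvy⟩ => hne ?_)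
    rw [← hvx i (Finset.mem_inter.1 hi).1, hvy i (Finset.mem_inter.1 hi).2]

lemma isFaceOfCodimLE_preimage_coord {φ : (Fin m → Bool) → (Fin n → Bool)}
    (hφ : IsCubeMorphism φ) (i : Fin n) (b : Bool) :
    IsFaceOfCodimLE (φ ⁻¹' {w | w i = b}) 1 := by
  rcases isCubeMorphism_iff.1 hφ i with ⟨b', hb'⟩ | ⟨j, b', hj⟩
  · by_cases hb : b' = b
    · simpa [hb', hb] using isFaceOfCodimLE_univ.mono (Nat.zero_le 1)
    · simpa [hb', hb] using isFaceOfCodimLE_empty 1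
  · refine Or.inr ⟨{j}, fun _ => b ^^ b', by simp, ?_⟩
    ext v
    simp only [Set.mem_preimage, Set.mem_ofPred_eq, hj, cubeFace, Finset.mem_singleton,
      forall_eq]
    cases b <;> cases b' <;> cases v j <;> simp

lemma IsFaceOfCodimLE.preimage {φ : (Fin m → Bool) → (Fin n → Bool)} (hφ : IsCubeMorphism φ)
    {S : Set (Fin n → Bool)} {c : ℕ} (hS : IsFaceOfCodimLE S c) :
    IsFaceOfCodimLE (φ ⁻¹' S) c := by
  classical
  rcases hS with rfl | ⟨I, x, hI, rfl⟩
  · exact isFaceOfCodimLE_empty c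
  refine IsFaceOfCodimLE.mono ?_ hI
  clear hI
  induction I using Finset.induction_on with
  | empty => simpa [cubeFace_empty] using isFaceOfCodimLE_univ
  | insert i I hi ih =>
    rw [cubeFace_insert, Set.preimage_inter, Finset.card_insert_of_notMem hi, add_comm]
    exact (isFaceOfCodimLE_preimage_coord hφ i (x i)).inter ih

end Faces

def precompHom {α β M : Type*} [Monoid M] (φ : α → β) : (β → M) →* (α → M) where
  toFun q := q ∘ φ
  map_one' := rfl
  map_mul' _ _ := rfl

open scoped commutatorElement

namespace IsGrpFiltrationHK

variable {G : Type*} [Group G] {Gf : ℕ → Subgroup G}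

lemma antitone (hGf : IsGrpFiltrationHK Gf) : Antitone Gf :=
  antitone_nat_of_succ_le hGf.1

lemma commutator_mem (hGf : IsGrpFiltrationHK Gf) {i j : ℕ} {x y : G} (hx : x ∈ Gf i)
    (hy : y ∈ Gf j) : ⁅x, y⁆ ∈ Gf (i + j) := by
  simpa [commutatorElement_def] using hGf.2 i j x⁻¹ (inv_mem hx) y⁻¹ (inv_mem hy)

lemma shift (hGf : IsGrpFiltrationHK Gf) : IsGrpFiltrationHK fun k => Gf (k + 1) :=
  ⟨fun _ => hGf.1 _, fun i j x hx y hy => hGf.antitone (by omega) (hGf.2 _ _ x hx y hy)⟩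

end IsGrpFiltrationHK

section HKCubes

variable {G : Type*} [Group G] {Gf : ℕ → Subgroup G} {m n : ℕ}

lemma faceEl_empty (g : G) : faceEl (∅ : Set (Fin n → Bool)) g = 1 := by
  funext v
  simp [faceEl]

lemma faceEl_inv (S : Set (Fin n → Bool)) (g : G) : (faceEl S g)⁻¹ = faceEl S g⁻¹ := by
  funext v
  by_cases hv : v ∈ S <;> simp [faceEl, hv]

lemma faceEl_conj_faceEl (F F' : Set (Fin n → Bool)) (g h : G) :
    faceEl F' h * faceEl F g * (faceEl F' h)⁻¹ = faceEl F g * faceEl (F ∩ F') ⁅g⁻¹, h⁆ := by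
  funext v
  by_cases hv : v ∈ F <;> by_cases hv' : v ∈ F' <;>
    simp [faceEl, hv, hv', commutatorElement_def, mul_assoc]

lemma mulIndicator_faceEl (S F : Set (Fin n → Bool)) (g : G) :
    S.mulIndicator (faceEl F g) = faceEl (S ∩ F) g := by
  funext v
  by_cases hv : v ∈ S <;> by_cases hv' : v ∈ F <;> simp [faceEl, Set.mulIndicator, hv, hv']

lemma faceEl_mem_hkCubes (hGf : IsGrpFiltrationHK Gf) {S : Set (Fin n → Bool)} {c : ℕ} {g : G}
    (hS : IsFaceOfCodimLE S c) (hg : g ∈ Gf c) : faceEl S g ∈ hkCubes Gf n := by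
  rcases hS with rfl | ⟨I, x, hI, rfl⟩
  · rw [faceEl_empty]
    exact one_mem _
  · exact Subgroup.subset_closure ⟨I.card, _, g, ⟨I, x, rfl, rfl⟩, hGf.antitone hI hg, rfl⟩

lemma hkCubes_le_comap {Gf' : ℕ → Subgroup G}
    (f : ((Fin n → Bool) → G) →* ((Fin m → Bool) → G))
    (hf : ∀ c F g, IsFaceOfCodim F c → g ∈ Gf c → f (faceEl F g) ∈ hkCubes Gf' m) :
    hkCubes Gf n ≤ (hkCubes Gf' m).comap f :=
  (Subgroup.closure_le _).2 fun _ ⟨c, F, g, hF, hg, hq⟩ => hq ▸ hf c F g hF hg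

lemma comp_mem_hkCubes (hGf : IsGrpFiltrationHK Gf) {φ : (Fin m → Bool) → (Fin n → Bool)}
    (hφ : IsCubeMorphism φ) {q : (Fin n → Bool) → G} (hq : q ∈ hkCubes Gf n) :
    q ∘ φ ∈ hkCubes Gf m :=
  hkCubes_le_comap (precompHom φ)
    (fun _ _ _ hF hg => faceEl_mem_hkCubes hGf (hF.isFaceOfCodimLE.preimage hφ) hg) hq

lemma mem_hkCubes_zero_iff {q : (Fin 0 → Bool) → G} :
    q ∈ hkCubes Gf 0 ↔ q (fun i => i.elim0) ∈ Gf 0 := by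
  constructor
  · intro hq
    have hle : hkCubes Gf 0 ≤
        (Gf 0).comap (Pi.evalMonoidHom (fun _ : Fin 0 → Bool => G) fun i => i.elim0) := by
      refine (Subgroup.closure_le _).2 ?_
      rintro _ ⟨c, _, g, ⟨I, x, rfl, rfl⟩, hg, rfl⟩
      have hI : I = ∅ := Finset.eq_empty_of_isEmpty I
      subst hI
      simpa [faceEl, cubeFace] using hg
    exact hle hq
  · intro hq
    refine Subgroup.subset_closure
      ⟨0, Set.univ, _, ⟨∅, fun i => i.elim0, rfl, (cubeFace_empty _).symm⟩, hq, ?_⟩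
    funext v
    simp [faceEl, Subsingleton.elim v fun i => i.elim0]

end HKCubes

section CubeDiff

variable {G : Type*} [Group G] {Gf : ℕ → Subgroup G} {n : ℕ}

lemma faceEl_conj_mem_hkCubes_shift (hGf : IsGrpFiltrationHK Gf) {F' : Set (Fin n → Bool)}
    {c' : ℕ} (hF' : IsFaceOfCodimLE F' c') {h : G} (hh : h ∈ Gf c') {a : (Fin n → Bool) → G}
    (ha : a ∈ hkCubes (fun k => Gf (k + 1)) n) :
    faceEl F' h * a * (faceEl F' h)⁻¹ ∈ hkCubes (fun k => Gf (k + 1)) n := by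
  refine hkCubes_le_comap (MulAut.conj (faceEl F' h)).toMonoidHom (fun c F g hF hg => ?_) ha
  rw [MulEquiv.coe_toMonoidHom, MulAut.conj_apply, faceEl_conj_faceEl]
  have hcomm : ⁅g⁻¹, h⁆ ∈ Gf (c + c' + 1) := by
    rw [show c + c' + 1 = c + 1 + c' by omega]
    exact hGf.commutator_mem (inv_mem hg) hh
  exact mul_mem (faceEl_mem_hkCubes hGf.shift hF.isFaceOfCodimLE hg)
    (faceEl_mem_hkCubes hGf.shift (hF.isFaceOfCodimLE.inter hF') hcomm)

lemma conj_mem_hkCubes_shift (hGf : IsGrpFiltrationHK Gf) {t a : (Fin n → Bool) → G}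
    (ht : t ∈ hkCubes Gf n) (ha : a ∈ hkCubes (fun k => Gf (k + 1)) n) :
    t * a * t⁻¹ ∈ hkCubes (fun k => Gf (k + 1)) n := by
  induction ht using Subgroup.closure_induction'' generalizing a with
  | mem s hs =>
    obtain ⟨c, F, g, hF, hg, rfl⟩ := hs
    exact faceEl_conj_mem_hkCubes_shift hGf hF.isFaceOfCodimLE hg ha
  | inv_mem s hs =>
    obtain ⟨c, F, g, hF, hg, rfl⟩ := hs
    rw [faceEl_inv]
    exact faceEl_conj_mem_hkCubes_shift hGf hF.isFaceOfCodimLE (inv_mem hg) ha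
  | one => simpa using ha
  | mul s s' _ _ ih ih' =>
    have hss' := ih (ih' ha)
    rwa [show s * (s' * a * s'⁻¹) * s⁻¹ = s * s' * a * (s * s')⁻¹ by group] at hss'

abbrev cubeCons (b : Bool) (v : Fin n → Bool) : Fin (n + 1) → Bool :=
  Fin.cons b v

lemma isCubeMorphism_cons (b : Bool) :
    IsCubeMorphism (cubeCons b : (Fin n → Bool) → Fin (n + 1) → Bool) := by
  refine isCubeMorphism_iff.2 fun i => ?_
  cases i using Fin.cases with
  | zero => exact Or.inl ⟨b, fun _ => rfl⟩
  | succ j => exact Or.inr ⟨j, false, fun _ => by simp⟩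

lemma isCubeMorphism_tail : IsCubeMorphism (Fin.tail : (Fin (n + 1) → Bool) → Fin n → Bool) :=
  isCubeMorphism_iff.2 fun i => Or.inr ⟨i.succ, false, fun _ => by simp [Fin.tail]⟩

lemma preimage_cons_cubeFace_of_notMem {I : Finset (Fin (n + 1))} (h0 : 0 ∉ I)
    (x : Fin (n + 1) → Bool) (b b' : Bool) :
    cubeCons b ⁻¹' cubeFace I x = cubeCons b' ⁻¹' cubeFace I x := by
  ext v
  refine forall₂_congr fun i hi => ?_
  cases i using Fin.cases with
  | zero => exact absurd hi h0
  | succ j => simp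

lemma isFaceOfCodimLE_preimage_cons {I : Finset (Fin (n + 1))} (h0 : 0 ∈ I)
    (x : Fin (n + 1) → Bool) (b : Bool) :
    IsFaceOfCodimLE (cubeCons b ⁻¹' cubeFace I x) (I.card - 1) := by
  have hsplit : cubeFace I x = {w | w 0 = x 0} ∩ cubeFace (I.erase 0) x := by
    rw [← cubeFace_insert, Finset.insert_erase h0]
  have hrest : IsFaceOfCodimLE (cubeCons b ⁻¹' cubeFace (I.erase 0) x) (I.erase 0).card :=
    IsFaceOfCodimLE.preimage (isCubeMorphism_cons b) (Or.inr ⟨_, x, le_rfl, rfl⟩)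
  rw [Finset.card_erase_of_mem h0] at hrest
  rw [hsplit, Set.preimage_inter]
  by_cases hb : b = x 0
  · simpa [hb] using hrest
  · simpa [hb] using isFaceOfCodimLE_empty (n := n) (I.card - 1)

def cubeDiff (q : (Fin (n + 1) → Bool) → G) : (Fin n → Bool) → G :=
  fun v => (q (cubeCons true v))⁻¹ * q (cubeCons false v)

lemma cubeDiff_mul (q r : (Fin (n + 1) → Bool) → G) :
    cubeDiff (q * r) =
      (r ∘ cubeCons true)⁻¹ * cubeDiff q * (r ∘ cubeCons true) * cubeDiff r := by
  funext v
  simp only [cubeDiff, Pi.mul_apply, Pi.inv_apply, Function.comp_apply]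
  group

lemma cubeDiff_inv (q : (Fin (n + 1) → Bool) → G) :
    cubeDiff q⁻¹ = (q ∘ cubeCons true) * (cubeDiff q)⁻¹ * (q ∘ cubeCons true)⁻¹ := by
  funext v
  simp only [cubeDiff, Pi.mul_apply, Pi.inv_apply, Function.comp_apply]
  group

lemma cubeDiff_faceEl (F : Set (Fin (n + 1) → Bool)) (g : G) :
    cubeDiff (faceEl F g) = faceEl (cubeCons true ⁻¹' F) g⁻¹ * faceEl (cubeCons false ⁻¹' F) g := by
  funext v
  simp only [cubeDiff, Pi.mul_apply, ← faceEl_inv, Pi.inv_apply]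
  rfl

lemma cubeDiff_faceEl_mem_hkCubes (hGf : IsGrpFiltrationHK Gf) {F : Set (Fin (n + 1) → Bool)}
    {c : ℕ} (hF : IsFaceOfCodim F c) {g : G} (hg : g ∈ Gf c) :
    cubeDiff (faceEl F g) ∈ hkCubes (fun k => Gf (k + 1)) n := by
  obtain ⟨I, x, rfl, hF⟩ := hF
  change F = cubeFace I x at hF
  subst hF
  rw [cubeDiff_faceEl]
  by_cases h0 : 0 ∈ I
  · have hg' : g ∈ Gf (I.card - 1 + 1) := by
      rwa [Nat.sub_add_cancel (Finset.card_pos.2 ⟨0, h0⟩)]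
    exact mul_mem
      (faceEl_mem_hkCubes hGf.shift (isFaceOfCodimLE_preimage_cons h0 x true) (inv_mem hg'))
      (faceEl_mem_hkCubes hGf.shift (isFaceOfCodimLE_preimage_cons h0 x false) hg')
  · rw [preimage_cons_cubeFace_of_notMem h0 x true false, ← faceEl_inv, inv_mul_cancel]
    exact one_mem _

lemma cubeDiff_mem_hkCubes (hGf : IsGrpFiltrationHK Gf) {q : (Fin (n + 1) → Bool) → G}
    (hq : q ∈ hkCubes Gf (n + 1)) : cubeDiff q ∈ hkCubes (fun k => Gf (k + 1)) n := by
  induction hq using Subgroup.closure_induction with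
  | mem f hf =>
    obtain ⟨c, F, g, hF, hg, rfl⟩ := hf
    exact cubeDiff_faceEl_mem_hkCubes hGf hF hg
  | one =>
    have hone : cubeDiff (1 : (Fin (n + 1) → Bool) → G) = 1 := by
      funext v
      simp [cubeDiff]
    exact hone ▸ one_mem _
  | mul q r _ hr ihq ihr =>
    have htop := inv_mem (comp_mem_hkCubes hGf (isCubeMorphism_cons true) hr)
    have hconj := conj_mem_hkCubes_shift hGf htop ihq
    rw [inv_inv] at hconj
    rw [cubeDiff_mul]
    exact mul_mem hconj ihr
  | inv q hq ihq =>
    rw [cubeDiff_inv]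
    exact conj_mem_hkCubes_shift hGf (comp_mem_hkCubes hGf (isCubeMorphism_cons true) hq)
      (inv_mem ihq)

noncomputable def upperExtHom : ((Fin n → Bool) → G) →* ((Fin (n + 1) → Bool) → G) :=
  (Set.mulIndicatorHom G {u | u 0 = true}).comp (precompHom Fin.tail)

lemma upperExtHom_mem_hkCubes (hGf : IsGrpFiltrationHK Gf) {r : (Fin n → Bool) → G}
    (hr : r ∈ hkCubes (fun k => Gf (k + 1)) n) : upperExtHom r ∈ hkCubes Gf (n + 1) := by
  refine hkCubes_le_comap upperExtHom (fun c F g hF hg => ?_) hr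
  have hupper : IsFaceOfCodimLE {u : Fin (n + 1) → Bool | u 0 = true} 1 :=
    Or.inr ⟨{0}, fun _ => true, by simp, by ext; simp [cubeFace]⟩
  have hface := hupper.inter (hF.isFaceOfCodimLE.preimage isCubeMorphism_tail)
  rw [add_comm 1 c] at hface
  have hext : upperExtHom (faceEl F g) = faceEl ({u | u 0 = true} ∩ Fin.tail ⁻¹' F) g :=
    mulIndicator_faceEl _ _ g
  rw [hext]
  exact faceEl_mem_hkCubes hGf hface hg

lemma mem_hkCubes_succ_iff (hGf : IsGrpFiltrationHK Gf) {q : (Fin (n + 1) → Bool) → G} :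
    q ∈ hkCubes Gf (n + 1) ↔
      q ∘ cubeCons false ∈ hkCubes Gf n ∧ cubeDiff q ∈ hkCubes (fun k => Gf (k + 1)) n := by
  refine ⟨fun hq => ⟨comp_mem_hkCubes hGf (isCubeMorphism_cons false) hq,
    cubeDiff_mem_hkCubes hGf hq⟩, fun ⟨hbot, hdiff⟩ => ?_⟩
  have hq : q = (q ∘ cubeCons false) ∘ Fin.tail * upperExtHom (cubeDiff q)⁻¹ := by
    funext u
    induction u using Fin.consCases with
    | cons b v =>
      cases b <;> simp [upperExtHom, precompHom, Set.mulIndicatorHom, Set.mulIndicator, cubeDiff]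
  rw [hq]
  exact mul_mem (comp_mem_hkCubes hGf isCubeMorphism_tail hbot)
    (upperExtHom_mem_hkCubes hGf (inv_mem hdiff))

end CubeDiff

section GraySigma

variable {G : Type*} [Group G] {m : ℕ}

/-- `σ` peels off the last coordinate, but its innermost factors pair the values along the
first one. -/
lemma graySigma_succ_eq_graySigma_cubeDiff (q : (Fin (m + 1) → Bool) → G) :
    graySigma (m + 1) q = graySigma m (cubeDiff q) := by
  induction m with
  | zero =>
    have hpt : ∀ b : Bool,
        (Fin.snoc (fun i => i.elim0) b : Fin 1 → Bool) = cubeCons b fun i => i.elim0 :=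
      fun b => funext fun i => by fin_cases i; rfl
    simp [graySigma, cubeDiff, hpt]
  | succ m ih =>
    have hsnoc : ∀ b, cubeDiff (fun v => q (Fin.snoc v b)) = fun v => cubeDiff q (Fin.snoc v b) :=
      fun b => funext fun v => by simp [cubeDiff, Fin.cons_snoc_eq_snoc_cons]
    rw [graySigma, ih, ih, graySigma, hsnoc, hsnoc]

lemma graySigma_mem_of_mem_hkCubes (Gf : ℕ → Subgroup G) (hGf : IsGrpFiltrationHK Gf)
    {q : (Fin m → Bool) → G} (hq : q ∈ hkCubes Gf m) : graySigma m q ∈ Gf m := by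
  induction m generalizing Gf with
  | zero => exact mem_hkCubes_zero_iff.1 hq
  | succ m ih =>
    rw [graySigma_succ_eq_graySigma_cubeDiff]
    exact ih _ hGf.shift (cubeDiff_mem_hkCubes hGf hq)

end GraySigma

section FaceMaps

variable {m n : ℕ} {φ : (Fin m → Bool) → (Fin n → Bool)}

lemma IsFaceMap.le (hφ : IsFaceMap φ) : m ≤ n := by
  have hcard := Fintype.card_le_of_injective φ hφ.2.1
  simp only [Fintype.card_fun, Fintype.card_bool, Fintype.card_fin] at hcard
  exact (Nat.pow_le_pow_iff_right (by norm_num)).1 hcard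

lemma isFaceMap_id : IsFaceMap (id : (Fin n → Bool) → Fin n → Bool) :=
  ⟨isCubeMorphism_iff.2 fun i => Or.inr ⟨i, false, fun _ => by simp⟩, Function.injective_id,
    ∅, fun _ => false, by simp, by simp⟩

lemma mem_cubeFace_map_succ {I : Finset (Fin n)} {y u : Fin (n + 1) → Bool} :
    u ∈ cubeFace (I.map (Fin.succEmb n)) y ↔ Fin.tail u ∈ cubeFace I (Fin.tail y) := by
  simp [cubeFace, Fin.tail]

lemma isFaceMap_cubeCons_comp (hφ : IsFaceMap φ) (b : Bool) :
    IsFaceMap (cubeCons b ∘ φ) := by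
  have hmn := hφ.le
  obtain ⟨hmor, hinj, I, x, hI, hF⟩ := hφ
  refine ⟨isCubeMorphism_iff.2 fun i => ?_,
    fun v w h => hinj (Fin.cons_right_injective (α := fun _ => Bool) b h),
    insert 0 (I.map (Fin.succEmb n)), Fin.cons b x, ?_, ?_⟩
  · cases i using Fin.cases with
    | zero => exact Or.inl ⟨b, fun _ => rfl⟩
    | succ i => simpa using isCubeMorphism_iff.1 hmor i
  · rw [Finset.card_insert_of_notMem (by simp), Finset.card_map, hI]
    omega
  · change Set.range φ = cubeFace I x at hF
    change _ = cubeFace _ _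
    ext u
    rw [cubeFace_insert, Set.mem_inter_iff, mem_cubeFace_map_succ, Fin.tail_cons, ← hF]
    constructor
    · rintro ⟨v, rfl⟩
      exact ⟨by simp, v, by simp⟩
    · rintro ⟨h0, v, hv⟩
      refine ⟨v, ?_⟩
      rw [Function.comp_apply, hv, ← Fin.cons_self_tail u]
      simp_all

def consMap (φ : (Fin m → Bool) → (Fin n → Bool)) (u : Fin (m + 1) → Bool) :
    Fin (n + 1) → Bool :=
  Fin.cons (u 0) (φ (Fin.tail u))

lemma isFaceMap_consMap (hφ : IsFaceMap φ) : IsFaceMap (consMap φ) := by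
  obtain ⟨hmor, hinj, I, x, hI, hF⟩ := hφ
  refine ⟨isCubeMorphism_iff.2 fun i => ?_, fun u w h => ?_,
    I.map (Fin.succEmb n), Fin.cons false x, ?_, ?_⟩
  · cases i using Fin.cases with
    | zero => exact Or.inr ⟨0, false, fun _ => by simp [consMap]⟩
    | succ i =>
      rcases isCubeMorphism_iff.1 hmor i with ⟨b, hb⟩ | ⟨j, b, hj⟩
      · exact Or.inl ⟨b, fun u => by simp [consMap, hb]⟩
      · exact Or.inr ⟨j.succ, b, fun u => by simp [consMap, hj, Fin.tail]⟩
  · obtain ⟨h0, htail⟩ := Fin.cons_inj.1 h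
    rw [← Fin.cons_self_tail u, ← Fin.cons_self_tail w, h0, hinj htail]
  · rw [Finset.card_map, hI, Nat.add_sub_add_right]
  · change Set.range φ = cubeFace I x at hF
    change _ = cubeFace _ _
    ext u
    rw [mem_cubeFace_map_succ, Fin.tail_cons, ← hF]
    constructor
    · rintro ⟨v, rfl⟩
      exact ⟨Fin.tail v, by simp [consMap]⟩
    · rintro ⟨v, hv⟩
      refine ⟨Fin.cons (u 0) v, ?_⟩
      rw [consMap, Fin.tail_cons, hv, Fin.cons_zero, Fin.cons_self_tail]

lemma cubeDiff_comp_consMap {G : Type*} [Group G] (q : (Fin (n + 1) → Bool) → G) :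
    cubeDiff (q ∘ consMap φ) = cubeDiff q ∘ φ := by
  funext v
  simp [cubeDiff, consMap]

end FaceMaps

theorem mem_hkCubes_of_forall_isFaceMap {G : Type*} [Group G] (Gf : ℕ → Subgroup G)
    (hGf : IsGrpFiltrationHK Gf) {n : ℕ} (q : (Fin n → Bool) → G)
    (hq : ∀ (m : ℕ) (φ : (Fin m → Bool) → (Fin n → Bool)), IsFaceMap φ →
      graySigma m (q ∘ φ) ∈ Gf m) :
    q ∈ hkCubes Gf n := by
  induction n generalizing Gf with
  | zero => exact mem_hkCubes_zero_iff.2 (hq 0 id isFaceMap_id)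
  | succ n ih =>
    refine (mem_hkCubes_succ_iff hGf).2
      ⟨ih Gf hGf _ fun m φ hφ => hq m _ (isFaceMap_cubeCons_comp hφ false),
        ih _ hGf.shift _ fun m φ hφ => ?_⟩
    rw [← cubeDiff_comp_consMap, ← graySigma_succ_eq_graySigma_cubeDiff]
    exact hq (m + 1) _ (isFaceMap_consMap hφ)

theorem stmt11 {G : Type*} [Group G] (Gf : ℕ → Subgroup G) (hGf : IsGrpFiltrationHK Gf)
    {n : ℕ} (q : (Fin n → Bool) → G) :
    q ∈ hkCubes Gf n ↔
      ∀ (m : ℕ) (φ : (Fin m → Bool) → (Fin n → Bool)), IsFaceMap φ →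
        graySigma m (q ∘ φ) ∈ Gf m :=
  ⟨fun hq _ _ hφ => graySigma_mem_of_mem_hkCubes Gf hGf (comp_mem_hkCubes hGf hφ.1 hq),
    mem_hkCubes_of_forall_isFaceMap Gf hGf q⟩
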